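/- Let C be a nonempty closed convex subset of a real Hilbert space X, R : X → X a linear isometry, S = R − Id, and z ∈ C. Then z = P_C(Rz) if and only if σ_C(Sz) + (1/2)‖Sz‖² = 0, where σ_C is the support function of C and P_C is the metric projection onto C. -/

import Mathlib

open RealInnerProductSpace

/-!
Since `R` preserves norms, `½‖Rz - z‖² = -⟪z, Rz - z⟫`, so the identity says exactly that the
support function `σ_C(Rz - z)` is attained at `z`, i.e. `⟪c - z, Rz - z⟫ ≤ 0` for all `c ∈ C`:
the variational characterization of `z` as the nearest point of `C` to `Rz`.
-/

theorem EReal.add_coe_eq_zero_iff {x : EReal} {b : ℝ} : x + b = 0 ↔ x = (-b : ℝ) := by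
  induction x using EReal.rec with
  | bot => simpa using (EReal.bot_ne_coe (-b))
  | top => simpa using (EReal.top_ne_coe (-b))
  | coe a => norm_cast; constructor <;> intro h <;> linarith

theorem biSup_eq_iff_forall_le {α ι : Type*} [CompleteLattice α] {s : Set ι} {f : ι → α} {i : ι}
    (hi : i ∈ s) : ⨆ j ∈ s, f j = f i ↔ ∀ j ∈ s, f j ≤ f i :=
  ⟨fun h j hj => h ▸ le_iSup₂ (f := fun j _ => f j) j hj,
    fun h => le_antisymm (iSup₂_le h) (le_iSup₂ (f := fun j _ => f j) i hi)⟩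

section InnerProductSpace

variable {F : Type*} [NormedAddCommGroup F] [InnerProductSpace ℝ F]

theorem half_norm_sub_sq_eq_neg_inner_of_norm_eq {x y : F} (h : ‖y‖ = ‖x‖) :
    1 / 2 * ‖y - x‖ ^ 2 = -⟪x, y - x⟫ := by
  rw [norm_sub_sq_real, inner_sub_right, real_inner_self_eq_norm_sq, h, real_inner_comm]
  ring

theorem forall_norm_sub_le_iff_forall_inner_le {K : Set F} (hK : Convex ℝ K) {u v : F}
    (hv : v ∈ K) : (∀ w ∈ K, ‖u - v‖ ≤ ‖u - w‖) ↔ ∀ w ∈ K, ⟪w, u - v⟫ ≤ ⟪v, u - v⟫ := by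
  have : Nonempty K := ⟨⟨v, hv⟩⟩
  have hbdd : BddBelow (Set.range fun w : K => ‖u - w‖) :=
    ⟨0, by rintro _ ⟨w, rfl⟩; positivity⟩
  have hinf : (∀ w ∈ K, ‖u - v‖ ≤ ‖u - w‖) ↔ ‖u - v‖ = ⨅ w : K, ‖u - w‖ :=
    ⟨fun h => le_antisymm (le_ciInf fun w => h w w.2) (ciInf_le hbdd ⟨v, hv⟩),
      fun h w hw => h ▸ ciInf_le hbdd ⟨w, hw⟩⟩
  rw [hinf, norm_eq_iInf_iff_real_inner_le_zero hK hv]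
  exact forall₂_congr fun w _ => by rw [real_inner_comm, inner_sub_left, sub_nonpos]

end InnerProductSpace

theorem stmt18_general {X : Type*} [NormedAddCommGroup X] [InnerProductSpace ℝ X]
    (C : Set X) (hconv : Convex ℝ C)
    (R : X →L[ℝ] X) (hiso : ∀ x : X, ‖R x‖ = ‖x‖) (z : X) (hz : z ∈ C) :
    (∀ y ∈ C, ‖z - R z‖ ≤ ‖y - R z‖) ↔
    (⨆ c ∈ C, ((⟪c, R z - z⟫ : ℝ) : EReal)) + ((1 / 2 * ‖R z - z‖ ^ 2 : ℝ) : EReal) = 0 := by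
  rw [half_norm_sub_sq_eq_neg_inner_of_norm_eq (hiso z), EReal.add_coe_eq_zero_iff, neg_neg,
    biSup_eq_iff_forall_le (f := fun c => ((⟪c, R z - z⟫ : ℝ) : EReal)) hz]
  simp_rw [EReal.coe_le_coe_iff, norm_sub_rev _ (R z)]
  exact forall_norm_sub_le_iff_forall_inner_le hconv hz

/-- For a nonempty closed convex `C`, a linear isometry `R`, `S = R - Id`, and `z ∈ C`:
`z = P_C (Rz)` if and only if `σ_C(Sz) + ½‖Sz‖² = 0`. -/
theorem stmt18 {X : Type*} [NormedAddCommGroup X] [InnerProductSpace ℝ X] [CompleteSpace X]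
    (C : Set X) (hne : C.Nonempty) (hcl : IsClosed C) (hconv : Convex ℝ C)
    (R : X →L[ℝ] X) (hiso : ∀ x : X, ‖R x‖ = ‖x‖) (z : X) (hz : z ∈ C) :
    (∀ y ∈ C, ‖z - R z‖ ≤ ‖y - R z‖) ↔
    (⨆ c ∈ C, ((⟪c, R z - z⟫ : ℝ) : EReal)) + ((1 / 2 * ‖R z - z‖ ^ 2 : ℝ) : EReal) = 0 :=
  stmt18_general C hconv R hiso z hz
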